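/- (Proposition 2 of the paper.) Suppose every loss is quadratic: φ_i(x) = (1/(2γ))(x − y_i)² for given y_i ∈ ℝ. Suppose I = {i : κ_i ≠ 0} is nonempty and p is a probability vector with min_{i∈I} p_i > 0. For each i let Δ_i ∈ ℝ maximize Δ ↦ −φ_i*(−(α_i + Δ)) − (A_iᵀw)·Δ − (v_i/(2λn))·Δ². Then, without any condition relating θ(κ, p) to min_{i∈I} p_i, ∑_{i=1}^n p_i·(D(α + Δ_i e_i) − D(α)) ≥ θ(κ, p)·(P(w) − D(α)), where θ(κ, p) = nλγ·(∑_{i∈I} κ_i²)/(∑_{i∈I} κ_i²(v_i + nλγ)/p_i). -/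

import Mathlib

/-!
Since `g*` has a 1-Lipschitz gradient, moving the `i`-th dual coordinate by `δ` raises `D` by at
least `(1/n)` times the coordinate objective maximized by `Δᵢ`. For quadratic losses that objective
is an explicit concave quadratic in `δ`, whose maximum gives the gain
`λγ²κᵢ² / (2(vᵢ + nλγ))`. Since `w` attains `g*(ᾱ)`, the duality gap splits into the
Fenchel–Young gaps of the losses, which for quadratic losses are `γκᵢ²/2`, so
`P(w) − D(α) = γ/(2n) ∑ κᵢ²`. Sedrakyan's form of Cauchy–Schwarz,
`(∑ κᵢ²)² / ∑ κᵢ²cᵢ/pᵢ ≤ ∑ pᵢκᵢ²/cᵢ` over `I` with `cᵢ = vᵢ + nλγ`, compares the two.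
-/

open scoped InnerProductSpace NNReal
open Finset

section Smooth

variable {E : Type*} [NormedAddCommGroup E] [InnerProductSpace ℝ E]

theorem inner_add_smul_le_of_lipschitzWith {f' : E → E} {K : ℝ≥0} (hK : LipschitzWith K f')
    (z u : E) {t : ℝ} (ht : 0 ≤ t) :
    ⟪f' (z + t • u), u⟫_ℝ ≤ ⟪f' z, u⟫_ℝ + K * t * ‖u‖ ^ 2 := by
  have hdist : ‖f' (z + t • u) - f' z‖ ≤ K * (t * ‖u‖) := by
    simpa [dist_eq_norm, norm_smul, abs_of_nonneg ht] using hK.dist_le_mul (z + t • u) z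
  have hcs := real_inner_le_norm (f' (z + t • u) - f' z) u
  rw [inner_sub_left] at hcs
  nlinarith [norm_nonneg u]

theorem le_add_inner_add_of_lipschitzWith_gradient [CompleteSpace E] {f : E → ℝ} {f' : E → E}
    {K : ℝ≥0} (hf : ∀ z, HasGradientAt f (f' z) z) (hK : LipschitzWith K f') (z u : E) :
    f (z + u) ≤ f z + ⟪f' z, u⟫_ℝ + K / 2 * ‖u‖ ^ 2 := by
  have hline (t : ℝ) : HasDerivAt (fun t : ℝ => f (z + t • u)) ⟪f' (z + t • u), u⟫_ℝ t :=
    (hf _).hasFDerivAt.comp_hasDerivAt t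
      (by simpa using ((hasDerivAt_id t).smul_const u).const_add z)
  have hbound (t : ℝ) : HasDerivAt (fun t : ℝ => f z + t * ⟪f' z, u⟫_ℝ + K / 2 * t ^ 2 * ‖u‖ ^ 2)
      (⟪f' z, u⟫_ℝ + K * t * ‖u‖ ^ 2) t := by
    refine ((((hasDerivAt_id' t).mul_const ⟪f' z, u⟫_ℝ).const_add (f z)).add
      (((hasDerivAt_pow 2 t).const_mul ((K : ℝ) / 2)).mul_const (‖u‖ ^ 2))).congr_deriv ?_
    ring
  have key := image_le_of_deriv_right_le_deriv_boundary
    (fun t _ => (hline t).continuousAt.continuousWithinAt)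
    (fun t _ => (hline t).hasDerivWithinAt) (by simp)
    (fun t _ => (hbound t).continuousAt.continuousWithinAt)
    (fun t _ => (hbound t).hasDerivWithinAt)
    (fun t ht => inner_add_smul_le_of_lipschitzWith hK z u ht.1) (Set.right_mem_Icc.2 zero_le_one)
  simpa using key

end Smooth

noncomputable section

def quadLoss (y γ x : ℝ) : ℝ := 1 / (2 * γ) * (x - y) ^ 2

def quadLossConj (y γ u : ℝ) : ℝ := y * u + γ * u ^ 2 / 2

end

theorem isLUB_quadLossConj {γ : ℝ} (hγ : 0 < γ) (y u : ℝ) :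
    IsLUB (Set.range fun x => x * u - quadLoss y γ x) (quadLossConj y γ u) := by
  unfold quadLoss quadLossConj
  refine ⟨?_, fun b hb => ?_⟩
  · rintro _ ⟨x, rfl⟩
    have hsq : y * u + γ * u ^ 2 / 2 - (x * u - 1 / (2 * γ) * (x - y) ^ 2)
        = 1 / (2 * γ) * (x - y - γ * u) ^ 2 := by
      field_simp
      ring
    have : 0 ≤ 1 / (2 * γ) * (x - y - γ * u) ^ 2 := by positivity
    linarith
  · -- the supremum is attained at `x = y + γ u`
    convert hb ⟨y + γ * u, rfl⟩ using 1
    field_simp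
    ring

theorem hasDerivAt_quadLoss {γ : ℝ} (hγ : γ ≠ 0) (y x : ℝ) :
    HasDerivAt (quadLoss y γ) ((x - y) / γ) x := by
  show HasDerivAt (fun x => 1 / (2 * γ) * (x - y) ^ 2) _ x
  refine ((((hasDerivAt_id' x).sub_const y).pow 2).const_mul (1 / (2 * γ))).congr_deriv ?_
  field_simp
  ring

theorem quadLoss_add_quadLossConj_neg {γ : ℝ} (hγ : γ ≠ 0) (y a α : ℝ) :
    quadLoss y γ a + quadLossConj y γ (-α) + α * a = γ / 2 * (α + (a - y) / γ) ^ 2 := by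
  unfold quadLoss quadLossConj
  field_simp
  ring

theorem Fintype.sum_update_eq_add_sub {ι M : Type*} [Fintype ι] [DecidableEq ι] [AddCommGroup M]
    (F : ι → M) (i : ι) (b : M) :
    ∑ j, Function.update F i b j = ∑ j, F j + (b - F i) := by
  rw [sum_update_of_mem (mem_univ i), sum_eq_add_sum_sdiff_singleton_of_mem (mem_univ i) F]
  abel

section Duality

variable {E : Type*} [NormedAddCommGroup E] [InnerProductSpace ℝ E] {n : ℕ}

noncomputable section

def dualPoint (lam : ℝ) (A : Fin n → E) (α : Fin n → ℝ) : E :=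
  (1 / (lam * n)) • ∑ i, α i • A i

def dualObjective (lam : ℝ) (A : Fin n → E) (gs : E → ℝ) (φs : Fin n → ℝ → ℝ)
    (α : Fin n → ℝ) : ℝ :=
  -lam * gs (dualPoint lam A α) - (1 / (n : ℝ)) * ∑ i, φs i (-α i)

def primalObjective (lam : ℝ) (A : Fin n → E) (g : E → ℝ) (φ : Fin n → ℝ → ℝ) (u : E) : ℝ :=
  (1 / (n : ℝ)) * ∑ i, φ i ⟪A i, u⟫_ℝ + lam * g u

end

theorem dualPoint_update {lam : ℝ} (hlam : lam ≠ 0) (A : Fin n → E) (α : Fin n → ℝ) (i : Fin n)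
    (δ : ℝ) :
    dualPoint lam A (Function.update α i (α i + δ)) = dualPoint lam A α + (δ / (lam * n)) • A i := by
  have hn : (n : ℝ) ≠ 0 := Nat.cast_ne_zero.2 (Fin.pos i).ne'
  simp only [dualPoint, Function.apply_update (fun j (a : ℝ) => a • A j),
    Fintype.sum_update_eq_add_sub, ← sub_smul, add_sub_cancel_left, smul_add, smul_smul]
  congr 2
  field_simp

theorem dualObjective_update_sub_ge [CompleteSpace E] {lam : ℝ} (hlam : 0 < lam) (A : Fin n → E)
    {gs : E → ℝ} {gs' : E → E} (hgs : ∀ z, HasGradientAt gs (gs' z) z)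
    (hlip : LipschitzWith 1 gs') (φs : Fin n → ℝ → ℝ) (α : Fin n → ℝ) (i : Fin n) (δ : ℝ) :
    (1 / (n : ℝ)) * (-φs i (-(α i + δ)) - ⟪A i, gs' (dualPoint lam A α)⟫_ℝ * δ
        - ‖A i‖ ^ 2 / (2 * lam * n) * δ ^ 2 + φs i (-α i)) ≤
      dualObjective lam A gs φs (Function.update α i (α i + δ)) - dualObjective lam A gs φs α := by
  have hn : (n : ℝ) ≠ 0 := Nat.cast_ne_zero.2 (Fin.pos i).ne'
  have hsmooth := le_add_inner_add_of_lipschitzWith_gradient hgs hlip (dualPoint lam A α)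
    ((δ / (lam * n)) • A i)
  rw [NNReal.coe_one, real_inner_smul_right, real_inner_comm, norm_smul, mul_pow, Real.norm_eq_abs,
    sq_abs] at hsmooth
  simp only [dualObjective, dualPoint_update hlam.ne', Function.apply_update (fun j a => φs j (-a)),
    Fintype.sum_update_eq_add_sub]
  have hscale : -lam * ((δ / (lam * n)) * ⟪A i, gs' (dualPoint lam A α)⟫_ℝ
      + 1 / 2 * ((δ / (lam * n)) ^ 2 * ‖A i‖ ^ 2)) =
      -(1 / (n : ℝ)) * (⟪A i, gs' (dualPoint lam A α)⟫_ℝ * δ + ‖A i‖ ^ 2 / (2 * lam * n) * δ ^ 2) := by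
    field_simp
  linarith [mul_le_mul_of_nonneg_left hsmooth hlam.le]

theorem primalObjective_sub_dualObjective {lam : ℝ} (hlam : lam ≠ 0) (A : Fin n → E)
    {g gs : E → ℝ} (φ φs : Fin n → ℝ → ℝ) {α : Fin n → ℝ} {w : E}
    (hattain : g w + gs (dualPoint lam A α) = ⟪w, dualPoint lam A α⟫_ℝ) :
    primalObjective lam A g φ w - dualObjective lam A gs φs α =
      (1 / (n : ℝ)) * ∑ i, (φ i ⟪A i, w⟫_ℝ + φs i (-α i) + α i * ⟪A i, w⟫_ℝ) := by
  have hpair : lam * ⟪w, dualPoint lam A α⟫_ℝ = (1 / (n : ℝ)) * ∑ i, α i * ⟪A i, w⟫_ℝ := by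
    simp only [dualPoint, real_inner_smul_right, inner_sum, real_inner_comm w]
    field_simp
  simp only [primalObjective, dualObjective, sum_add_distrib]
  linear_combination lam * hattain + hpair

end Duality

theorem quadLossConj_coordinate_gain {γ lam N v : ℝ} (hγ : 0 < γ) (hlam : 0 < lam) (hN : 0 < N)
    (hv : 0 ≤ v) {y α a κ : ℝ} (hκ : κ = α + (a - y) / γ) :
    (1 / N) * (-quadLossConj y γ (-(α + -(γ * lam * N * κ) / (v + N * lam * γ)))
        - a * (-(γ * lam * N * κ) / (v + N * lam * γ))
        - v / (2 * lam * N) * (-(γ * lam * N * κ) / (v + N * lam * γ)) ^ 2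
        + quadLossConj y γ (-α)) =
      lam * γ ^ 2 * κ ^ 2 / (2 * (v + N * lam * γ)) := by
  have hc : 0 < v + N * lam * γ := by positivity
  subst hκ
  unfold quadLossConj
  field_simp
  ring

theorem sq_sum_div_le_sum_mul_sq_div {ι : Type*} [Fintype ι] (κ p c : ι → ℝ)
    (hp : ∀ i, κ i ≠ 0 → 0 < p i) (hc : ∀ i, 0 < c i) :
    (∑ i, κ i ^ 2) ^ 2 / ∑ i ∈ univ.filter (fun i => κ i ≠ 0), κ i ^ 2 * c i / p i ≤
      ∑ i, p i * κ i ^ 2 / c i := by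
  set I := univ.filter (fun i => κ i ≠ 0)
  have hsupp {f : ι → ℝ} (hf : ∀ i, κ i = 0 → f i = 0) : ∑ i ∈ I, f i = ∑ i, f i :=
    sum_filter_of_ne fun i _ hfi hκi => hfi (hf i hκi)
  rw [← hsupp (f := fun i => κ i ^ 2) (by simp),
    ← hsupp (f := fun i => p i * κ i ^ 2 / c i) (by simp +contextual)]
  calc (∑ i ∈ I, κ i ^ 2) ^ 2 / ∑ i ∈ I, κ i ^ 2 * c i / p i
      ≤ ∑ i ∈ I, (κ i ^ 2) ^ 2 / (κ i ^ 2 * c i / p i) :=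
        sq_sum_div_le_sum_sq_div _ _ fun i hi => by
          have := hp i (mem_filter.1 hi).2
          have := hc i
          have := (mem_filter.1 hi).2
          positivity
    _ = ∑ i ∈ I, p i * κ i ^ 2 / c i := sum_congr rfl fun i hi => by
          have := (hp i (mem_filter.1 hi).2).ne'
          have := (hc i).ne'
          have := (mem_filter.1 hi).2
          field_simp

theorem stmt18_general (n d : ℕ) (hn : 1 ≤ n)
    (A : Fin n → EuclideanSpace ℝ (Fin d))
    (v : Fin n → ℝ) (hv : ∀ i, v i = ‖A i‖ ^ 2)
    (lam gam : ℝ) (hlam : 0 < lam) (hgam : 0 < gam)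
    (g : EuclideanSpace ℝ (Fin d) → ℝ)
    (y : Fin n → ℝ)
    (φ φ' : Fin n → ℝ → ℝ)
    (hφ : ∀ i x, φ i x = 1 / (2 * gam) * (x - y i) ^ 2)
    (hφdiff : ∀ i x, HasDerivAt (φ i) (φ' i x) x)
    (φs : Fin n → ℝ → ℝ)
    (hφs : ∀ i u, IsLUB (Set.range fun x : ℝ => x * u - φ i x) (φs i u))
    (gs : EuclideanSpace ℝ (Fin d) → ℝ)
    (gs' : EuclideanSpace ℝ (Fin d) → EuclideanSpace ℝ (Fin d))
    (hgs' : ∀ z, HasGradientAt gs (gs' z) z)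
    (hgs'lip : LipschitzWith 1 gs')
    (P : EuclideanSpace ℝ (Fin d) → ℝ)
    (hP : ∀ u, P u = (1 / (n : ℝ)) * ∑ i, φ i ⟪A i, u⟫_ℝ + lam * g u)
    (D : (Fin n → ℝ) → ℝ)
    (hD : ∀ β : Fin n → ℝ,
      D β = -lam * gs ((1 / (lam * n)) • (∑ i, β i • A i)) - (1 / (n : ℝ)) * ∑ i, φs i (-β i))
    (α : Fin n → ℝ)
    (abar : EuclideanSpace ℝ (Fin d))
    (habar : abar = (1 / (lam * n)) • (∑ i, α i • A i))
    (w : EuclideanSpace ℝ (Fin d)) (hw : w = gs' abar)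
    (hattain : g w + gs abar = ⟪w, abar⟫_ℝ)
    (κ : Fin n → ℝ) (hκ : ∀ i, κ i = α i + φ' i ⟪A i, w⟫_ℝ)
    (Δ : Fin n → ℝ)
    (hΔ : ∀ i, ∀ Δ' : ℝ,
      -φs i (-(α i + Δ')) - ⟪A i, w⟫_ℝ * Δ' - v i / (2 * lam * n) * Δ' ^ 2 ≤
      -φs i (-(α i + Δ i)) - ⟪A i, w⟫_ℝ * (Δ i) - v i / (2 * lam * n) * (Δ i) ^ 2)
    (p : Fin n → ℝ) (hp0 : ∀ i, 0 ≤ p i)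
    (hcoh : ∀ i, κ i ≠ 0 → 0 < p i)
    (θval : ℝ)
    (hθval : θval = (n : ℝ) * lam * gam *
        (∑ i ∈ Finset.univ.filter (fun i => κ i ≠ 0), κ i ^ 2) /
        (∑ i ∈ Finset.univ.filter (fun i => κ i ≠ 0),
          κ i ^ 2 * (v i + n * lam * gam) / p i))
 :
    ∑ i, p i * (D (Function.update α i (α i + Δ i)) - D α) ≥ θval * (P w - D α) := by
  obtain rfl : φ = fun i => quadLoss (y i) gam := funext fun i => funext (hφ i)
  obtain rfl : φs = fun i => quadLossConj (y i) gam :=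
    funext fun i => funext fun u => (hφs i u).unique (isLUB_quadLossConj hgam _ _)
  obtain rfl : abar = dualPoint lam A α := habar
  have hD' : D = dualObjective lam A gs fun i => quadLossConj (y i) gam := funext hD
  have hκ_eq (i : Fin n) : κ i = α i + (⟪A i, w⟫_ℝ - y i) / gam := by
    rw [hκ, (hφdiff i _).unique (hasDerivAt_quadLoss hgam.ne' _ _)]
  have hn₀ : (0 : ℝ) < n := by exact_mod_cast hn
  have hc (i : Fin n) : 0 < v i + n * lam * gam := by rw [hv]; positivity
  have hgain (i : Fin n) : lam * gam ^ 2 * κ i ^ 2 / (2 * (v i + n * lam * gam)) ≤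
      D (Function.update α i (α i + Δ i)) - D α := by
    rw [hD', ← quadLossConj_coordinate_gain hgam hlam hn₀ (hv i ▸ sq_nonneg _) (hκ_eq i)]
    refine le_trans ?_ (dualObjective_update_sub_ge hlam A hgs' hgs'lip _ α i (Δ i))
    rw [← hv, ← hw]
    exact mul_le_mul_of_nonneg_left (add_le_add_left (hΔ i _) _) (by positivity)
  have hgap : P w - D α = gam / (2 * n) * ∑ i, κ i ^ 2 := by
    rw [show P = primalObjective lam A g _ from funext hP, hD', primalObjective_sub_dualObjective hlam.ne' A _ _ hattain]
    simp only [quadLoss_add_quadLossConj_neg hgam.ne', ← hκ_eq, ← mul_sum]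
    field_simp
  rw [ge_iff_le, hθval, hgap]
  calc _ = lam * gam ^ 2 / 2 * ((∑ i, κ i ^ 2) ^ 2 /
        ∑ i ∈ univ.filter (fun i => κ i ≠ 0), κ i ^ 2 * (v i + n * lam * gam) / p i) := by
        rw [sum_filter_of_ne fun i _ h => by simpa using h]
        field_simp
    _ ≤ lam * gam ^ 2 / 2 * ∑ i, p i * κ i ^ 2 / (v i + n * lam * gam) := by
        gcongr
        exact sq_sum_div_le_sum_mul_sq_div κ p _ hcoh hc
    _ = ∑ i, p i * (lam * gam ^ 2 * κ i ^ 2 / (2 * (v i + n * lam * gam))) := by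
        rw [mul_sum]
        refine sum_congr rfl fun i _ => ?_
        field_simp
    _ ≤ _ := sum_le_sum fun i _ => mul_le_mul_of_nonneg_left (hgain i) (hp0 i)

/-- Proposition 2 of the paper: Suppose every loss is quadratic:
`φᵢ(x) = (1/(2γ))(x − yᵢ)²`. Suppose `I = {i : κᵢ ≠ 0}` is nonempty and `p` is a
probability vector with `min_{i∈I} pᵢ > 0`. For each `i` let `Δᵢ` maximize
`Δ ↦ −φᵢ*(−(αᵢ+Δ)) − (Aᵢᵀw)Δ − (vᵢ/(2λn))Δ²`. Then, without any condition relating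
`θ(κ,p)` to `min_{i∈I} pᵢ`,
`∑ᵢ pᵢ(D(α+Δᵢeᵢ) − D(α)) ≥ θ(κ,p)(P(w) − D(α))`, where
`θ(κ,p) = nλγ(∑_{i∈I}κᵢ²)/(∑_{i∈I}κᵢ²(vᵢ+nλγ)/pᵢ)`. -/
theorem stmt18 (n d : ℕ) (hn : 1 ≤ n) (hd : 1 ≤ d)
    (A : Fin n → EuclideanSpace ℝ (Fin d))
    (v : Fin n → ℝ) (hv : ∀ i, v i = ‖A i‖ ^ 2)
    (lam gam : ℝ) (hlam : 0 < lam) (hgam : 0 < gam)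
    (g : EuclideanSpace ℝ (Fin d) → ℝ)
    (hg : ∀ w₁ w₂ : EuclideanSpace ℝ (Fin d), ∀ a : ℝ, 0 ≤ a → a ≤ 1 →
      g (a • w₁ + (1 - a) • w₂) ≤ a * g w₁ + (1 - a) * g w₂ - a * (1 - a) / 2 * ‖w₁ - w₂‖ ^ 2)
    (y : Fin n → ℝ)
    (φ φ' : Fin n → ℝ → ℝ)
    (hφ : ∀ i x, φ i x = 1 / (2 * gam) * (x - y i) ^ 2)
    (hφdiff : ∀ i x, HasDerivAt (φ i) (φ' i x) x)
    (φs : Fin n → ℝ → ℝ)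
    (hφs : ∀ i u, IsLUB (Set.range fun x : ℝ => x * u - φ i x) (φs i u))
    (gs : EuclideanSpace ℝ (Fin d) → ℝ)
    (hgs : ∀ z, IsLUB (Set.range fun s : EuclideanSpace ℝ (Fin d) => ⟪s, z⟫_ℝ - g s) (gs z))
    (gs' : EuclideanSpace ℝ (Fin d) → EuclideanSpace ℝ (Fin d))
    (hgs' : ∀ z, HasGradientAt gs (gs' z) z)
    (hgs'lip : LipschitzWith 1 gs')
    (P : EuclideanSpace ℝ (Fin d) → ℝ)
    (hP : ∀ u, P u = (1 / (n : ℝ)) * ∑ i, φ i ⟪A i, u⟫_ℝ + lam * g u)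
    (D : (Fin n → ℝ) → ℝ)
    (hD : ∀ β : Fin n → ℝ,
      D β = -lam * gs ((1 / (lam * n)) • (∑ i, β i • A i)) - (1 / (n : ℝ)) * ∑ i, φs i (-β i))
    (α : Fin n → ℝ)
    (abar : EuclideanSpace ℝ (Fin d))
    (habar : abar = (1 / (lam * n)) • (∑ i, α i • A i))
    (w : EuclideanSpace ℝ (Fin d)) (hw : w = gs' abar)
    (hattain : g w + gs abar = ⟪w, abar⟫_ℝ)
    (κ : Fin n → ℝ) (hκ : ∀ i, κ i = α i + φ' i ⟪A i, w⟫_ℝ)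
    (Δ : Fin n → ℝ)
    (hΔ : ∀ i, ∀ Δ' : ℝ,
      -φs i (-(α i + Δ')) - ⟪A i, w⟫_ℝ * Δ' - v i / (2 * lam * n) * Δ' ^ 2 ≤
      -φs i (-(α i + Δ i)) - ⟪A i, w⟫_ℝ * (Δ i) - v i / (2 * lam * n) * (Δ i) ^ 2)
    (p : Fin n → ℝ) (hp0 : ∀ i, 0 ≤ p i) (hp1 : ∑ i, p i = 1)
    (hcoh : ∀ i, κ i ≠ 0 → 0 < p i)
    (hI : ∃ i, κ i ≠ 0)
    (θval : ℝ)
    (hθval : θval = (n : ℝ) * lam * gam *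
        (∑ i ∈ Finset.univ.filter (fun i => κ i ≠ 0), κ i ^ 2) /
        (∑ i ∈ Finset.univ.filter (fun i => κ i ≠ 0),
          κ i ^ 2 * (v i + n * lam * gam) / p i))
 :
    ∑ i, p i * (D (Function.update α i (α i + Δ i)) - D α) ≥ θval * (P w - D α) :=
  stmt18_general n d hn A v hv lam gam hlam hgam g y φ φ' hφ hφdiff φs hφs gs gs' hgs' hgs'lip P hP
    D hD α abar habar w hw hattain κ hκ Δ hΔ p hp0 hcoh θval hθval
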